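/- Let k > 2 be an integer and let x^k + F be a rigid defining series with tube model, F = Σ_{j+l ≥ k+1} A_{j,l} x^j y^l ∈ ℝ⟦x,y⟧. Then there exist unique complex numbers f_i (i ≥ 2) and g_i (i ≥ k+1) and a unique rigid defining series x^k + F* in rigid t-normal form such that, setting f(z) = Σ_{i ≥ 2} f_i z^i and g(z) = Σ_{i ≥ k+1} g_i z^i, the identity (x + Re f(x+iy))^k + F*(x + Re f(x+iy), y + Im f(x+iy)) = x^k + F(x,y) + Im g(x+iy) holds in ℝ⟦x,y⟧. -/

import Mathlib

noncomputable section

open MvPowerSeries Finsupp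

/-- Formal substitution of the family `a` into `f`, defined coefficientwise by a `finsum`
(which has the correct value whenever each `a i` has zero constant term). -/
def mSubst {σ τ R : Type*} [CommSemiring R] (a : σ → MvPowerSeries τ R)
    (f : MvPowerSeries σ R) : MvPowerSeries τ R :=
  fun d => finsum fun e : σ →₀ ℕ =>
    MvPowerSeries.coeff (R := R) e f * MvPowerSeries.coeff (R := R) d (e.prod fun i n => (a i) ^ n)

/-- Substitution of a multivariate series into a one-variable series. -/
def oSubst {τ R : Type*} [CommSemiring R] (a : MvPowerSeries τ R) (h : PowerSeries R) :
    MvPowerSeries τ R :=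
  mSubst (fun _ : Unit => a) h

/-- Coefficientwise real part. -/
def reP {σ : Type*} (h : MvPowerSeries σ ℂ) : MvPowerSeries σ ℝ :=
  fun d => (MvPowerSeries.coeff (R := ℂ) d h).re

/-- Coefficientwise imaginary part. -/
def imP {σ : Type*} (h : MvPowerSeries σ ℂ) : MvPowerSeries σ ℝ :=
  fun d => (MvPowerSeries.coeff (R := ℂ) d h).im

/-- The coefficient of `x^j y^l` in `F ∈ ℝ⟦x,y⟧`. -/
def cfxy (F : MvPowerSeries (Fin 2) ℝ) (j l : ℕ) : ℝ :=
  MvPowerSeries.coeff (R := ℝ) (single 0 j + single 1 l) F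

/-- The series `x + iy ∈ ℂ⟦x,y⟧`. -/
def zxy : MvPowerSeries (Fin 2) ℂ :=
  X 0 + MvPowerSeries.C (σ := Fin 2) (R := ℂ) Complex.I * X 1

/-- `F` is the tail of a rigid defining series with tube model, i.e.
`x^k + F = x^k + Σ_{j+l ≥ k+1} A_{j,l} x^j y^l`. -/
def IsRigidTail (k : ℕ) (F : MvPowerSeries (Fin 2) ℝ) : Prop :=
  ∀ j l : ℕ, j + l ≤ k → cfxy F j l = 0

/-- `x^k + F` is in rigid t-normal form: `A_{0,l} = A_{1,l} = A_{k-1,l} = A_{k,l} = 0`. -/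
def IsRigidTNormal (k : ℕ) (F : MvPowerSeries (Fin 2) ℝ) : Prop :=
  ∀ j l : ℕ, k + 1 ≤ j + l → (j = 0 ∨ j = 1 ∨ j = k - 1 ∨ j = k) → cfxy F j l = 0

/-!
Write `t = (f, g, F*)` and let `T(t)` be the series with
`x^k + T(t) = (x + Re f)^k + F*(x + Re f, y + Im f) - Im g`, so that the identity reads `T(t) = F`.
For `m > k`, the degree-`m` part of `T(t)` is
`F*_m + k x^(k-1) Re(f_(m+1-k) z^(m+1-k)) - Im(g_m z^m)` plus terms involving only `f_i` with
`i ≤ m - k`, `g_i` with `i < m` and `F*` in degrees `< m`. In the coefficients of `x^j y^(m-j)`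
with `j ∈ {0, 1, k-1, k}` the term `F*_m` is absent: those with `j ∈ {0, 1}` determine `g_m`, and
those with `j ∈ {k-1, k}` then determine `f_(m+1-k)`; the others determine `F*_m`. Solving
degree by degree gives existence, and the same triangular structure gives uniqueness.
-/

section Order

variable {σ R : Type*} [CommRing R] {a a' b b' : MvPowerSeries σ R}

lemma coeff_eq_zero_of_lt_of_le_order {p : ℕ} (ha : (p : ℕ∞) ≤ a.order) {d : σ →₀ ℕ}
    (hd : degree d < p) : coeff d a = 0 :=
  coeff_of_lt_order (lt_of_lt_of_le (by exact_mod_cast hd) ha)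

lemma le_order_mul_of_le {p q : ℕ∞} (ha : p ≤ a.order) (hb : q ≤ b.order) :
    p + q ≤ (a * b).order :=
  (add_le_add ha hb).trans le_order_mul

lemma le_order_pow_of_one_le (ha : 1 ≤ a.order) (s : ℕ) : (s : ℕ∞) ≤ (a ^ s).order :=
  le_order_pow_of_constantCoeff_eq_zero s (one_le_order_iff_constCoeff_eq_zero.mp ha)

lemma le_order_pow_sub_pow {p : ℕ∞} (h : p + 1 ≤ (a - a').order) (ha : 1 ≤ a.order)
    (ha' : 1 ≤ a'.order) (s : ℕ) : p + s ≤ (a ^ s - a' ^ s).order := by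
  induction s with
  | zero => simp
  | succ s ih =>
    have key : a ^ (s + 1) - a' ^ (s + 1) = (a - a') * a ^ s + a' * (a ^ s - a' ^ s) := by ring
    rw [key]
    refine (le_min ?_ ?_).trans min_order_le_add
    · exact le_of_eq_of_le (by push_cast; ring) (le_order_mul_of_le h (le_order_pow_of_one_le ha s))
    · exact le_of_eq_of_le (by push_cast; ring) (le_order_mul_of_le ha' ih)

lemma le_order_pow_mul_pow_sub {p : ℕ∞} (ha : p + 1 ≤ (a - a').order)
    (hb : p + 1 ≤ (b - b').order) (ha₁ : 1 ≤ a.order) (ha₁' : 1 ≤ a'.order) (hb₁ : 1 ≤ b.order)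
    (hb₁' : 1 ≤ b'.order) (i j : ℕ) : p + i + j ≤ (a ^ i * b ^ j - a' ^ i * b' ^ j).order := by
  have key : a ^ i * b ^ j - a' ^ i * b' ^ j
      = (a ^ i - a' ^ i) * b ^ j + a' ^ i * (b ^ j - b' ^ j) := by ring
  rw [key]
  refine (le_min ?_ ?_).trans min_order_le_add
  · exact le_order_mul_of_le (le_order_pow_sub_pow ha ha₁ ha₁' i) (le_order_pow_of_one_le hb₁ j)
  · exact le_of_eq_of_le (by ring)
      (le_order_mul_of_le (le_order_pow_of_one_le ha₁' i) (le_order_pow_sub_pow hb hb₁ hb₁' j))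

lemma one_le_order_add {x u : MvPowerSeries σ R} (hx : 1 ≤ x.order) (hu : 2 ≤ u.order) :
    1 ≤ (x + u).order :=
  (le_min hx (le_trans (by norm_num) hu)).trans min_order_le_add

lemma le_order_add_pow_sub_add_pow_sub {x u u' : MvPowerSeries σ R} {p : ℕ∞} (hx : 1 ≤ x.order)
    (hu : 2 ≤ u.order) (hu' : 2 ≤ u'.order) (h : p ≤ (u - u').order) (k : ℕ) :
    p + k + 1 ≤ ((x + u) ^ (k + 1) - (x + u') ^ (k + 1) - (k + 1) * x ^ k * (u - u')).order := by
  induction k with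
  | zero => simp
  | succ k ih =>
    have key : (x + u) ^ (k + 2) - (x + u') ^ (k + 2) - (↑(k + 1) + 1) * x ^ (k + 1) * (u - u')
        = (x + u) * ((x + u) ^ (k + 1) - (x + u') ^ (k + 1) - (k + 1) * x ^ k * (u - u'))
          + (u - u') * ((k + 1) * x ^ k * u + ((x + u') ^ (k + 1) - x ^ (k + 1))) := by
      push_cast; ring
    rw [key]
    refine (le_min ?_ ?_).trans min_order_le_add
    · exact le_of_eq_of_le (by push_cast; ring) (le_order_mul_of_le (one_le_order_add hx hu) ih)
    · have hlin : (k + 2 : ℕ∞) ≤ ((k + 1) * x ^ k * u).order :=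
        le_of_eq_of_le (by ring) (le_order_mul_of_le (le_order_mul_of_le zero_le
          (le_order_pow_of_one_le hx k)) hu)
      have hpow : (k + 2 : ℕ∞) ≤ ((x + u') ^ (k + 1) - x ^ (k + 1)).order :=
        le_of_eq_of_le (by push_cast; ring) (le_order_pow_sub_pow (p := 1)
          (by rwa [add_sub_cancel_left, one_add_one_eq_two]) (one_le_order_add hx hu') hx (k + 1))
      exact le_of_eq_of_le (by push_cast; ring)
        (le_order_mul_of_le h ((le_min hlin hpow).trans min_order_le_add))

lemma le_order_finsuppProd {τ : Type*} {a : σ → MvPowerSeries τ R} (ha : ∀ i, 1 ≤ (a i).order)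
    (e : σ →₀ ℕ) : ((degree e : ℕ) : ℕ∞) ≤ (e.prod fun i n => a i ^ n).order := by
  rw [Finsupp.prod, degree_apply, Nat.cast_sum]
  exact (Finset.sum_le_sum fun i _ => le_order_pow_of_one_le (ha i) (e i)).trans
    (le_order_prod _ _)

lemma coeff_mSubst_eq_sum [Finite σ] {τ : Type*} {a : σ → MvPowerSeries τ R}
    (ha : ∀ i, 1 ≤ (a i).order) (f : MvPowerSeries σ R) (d : τ →₀ ℕ) :
    coeff d (mSubst a f) = ∑ e ∈ (finite_of_degree_le (degree d)).toFinset,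
      coeff e f * coeff d (e.prod fun i n => a i ^ n) := by
  refine finsum_eq_sum_of_support_subset _ fun e he => ?_
  rw [Set.Finite.coe_toFinset]
  by_contra hlt
  refine he ?_
  dsimp only
  rw [coeff_eq_zero_of_lt_of_le_order (le_order_finsuppProd ha e) (not_le.mp hlt), mul_zero]

end Order

lemma degree_fin_two (d : Fin 2 →₀ ℕ) : degree d = d 0 + d 1 := by
  rw [degree_eq_sum, Fin.sum_univ_two]

lemma single_add_single_eq (d : Fin 2 →₀ ℕ) : single 0 (d 0) + single 1 (d 1) = d := by
  ext i; fin_cases i <;> simp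

lemma coeff_eq_cfxy (G : MvPowerSeries (Fin 2) ℝ) (d : Fin 2 →₀ ℕ) :
    coeff d G = cfxy G (d 0) (d 1) := by
  rw [cfxy, single_add_single_eq]

lemma IsRigidTail.coeff_eq_zero {k : ℕ} {A : MvPowerSeries (Fin 2) ℝ} (hA : IsRigidTail k A)
    {d : Fin 2 →₀ ℕ} (hd : degree d ≤ k) : coeff d A = 0 := by
  rw [coeff_eq_cfxy]
  exact hA _ _ (by rwa [← degree_fin_two])

lemma IsRigidTNormal.coeff_eq_zero {k : ℕ} {A : MvPowerSeries (Fin 2) ℝ}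
    (hA : IsRigidTNormal k A) {d : Fin 2 →₀ ℕ} (hd : k < degree d)
    (hj : d 0 = 0 ∨ d 0 = 1 ∨ d 0 = k - 1 ∨ d 0 = k) : coeff d A = 0 := by
  rw [coeff_eq_cfxy]
  exact hA _ _ (by rwa [← degree_fin_two]) hj

lemma coeff_mSubst_fin_two {R : Type*} [CommRing R] {a b : MvPowerSeries (Fin 2) R}
    (ha : 1 ≤ a.order) (hb : 1 ≤ b.order) (f : MvPowerSeries (Fin 2) R) (d : Fin 2 →₀ ℕ) :
    coeff d (mSubst ![a, b] f) = ∑ e ∈ (finite_of_degree_le (degree d)).toFinset,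
      coeff e f * coeff d (a ^ e 0 * b ^ e 1) := by
  rw [coeff_mSubst_eq_sum (by simp [Fin.forall_fin_two, ha, hb])]
  refine Finset.sum_congr rfl fun e _ => ?_
  rw [Finsupp.prod_fintype _ _ (by simp), Fin.prod_univ_two]
  rfl

lemma coeff_zxy_pow (n : ℕ) (d : Fin 2 →₀ ℕ) :
    coeff d (zxy ^ n) = if degree d = n then n.choose (d 0) * Complex.I ^ d 1 else 0 := by
  have hterm : ∀ t ∈ Finset.range (n + 1), (X 0 : MvPowerSeries (Fin 2) ℂ) ^ t
      * (C Complex.I * X 1) ^ (n - t) * (n.choose t : MvPowerSeries (Fin 2) ℂ)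
      = monomial (single 0 t + single 1 (n - t)) (n.choose t * Complex.I ^ (n - t)) := by
    intro t _
    rw [mul_pow, X_pow_eq, X_pow_eq, ← map_pow, ← map_natCast (C (σ := Fin 2))]
    simp only [← monomial_zero_eq_C, monomial_mul_monomial]
    congr 1 <;> simp [add_comm, mul_comm]
  have hsupp : ∀ t ∈ Finset.range (n + 1),
      (d = single 0 t + single 1 (n - t)) ↔ (degree d = n ∧ t = d 0) := by
    intro t ht
    rw [Finset.mem_range] at ht
    constructor
    · rintro rfl
      refine ⟨?_, by simp⟩
      rw [map_add, degree_single, degree_single]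
      omega
    · rintro ⟨hd, rfl⟩
      rw [degree_fin_two] at hd
      rw [← hd, Nat.add_sub_cancel_left, single_add_single_eq]
  rw [zxy, add_pow, Finset.sum_congr rfl hterm, map_sum]
  simp only [coeff_monomial]
  rw [Finset.sum_congr rfl fun t ht => if_congr (hsupp t ht) rfl rfl]
  by_cases hd : degree d = n
  · have hd1 : n - d 0 = d 1 := by rw [← hd, degree_fin_two]; omega
    simp only [hd, true_and, if_true]
    rw [Finset.sum_ite_eq', if_pos (by rw [Finset.mem_range, ← hd, degree_fin_two]; omega), hd1]
  · simp [hd]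

lemma coeff_oSubst_zxy (h : PowerSeries ℂ) (d : Fin 2 →₀ ℕ) :
    coeff d (oSubst zxy h) =
      PowerSeries.coeff (degree d) h * (degree d).choose (d 0) * Complex.I ^ d 1 := by
  have hprod : ∀ e : Unit →₀ ℕ, (e.prod fun _ n => zxy ^ n) = zxy ^ e () := fun e => by
    rw [Finsupp.prod_fintype _ _ (fun _ => pow_zero _), Fintype.prod_unique]
  have hvanish : ∀ e : Unit →₀ ℕ, e ≠ single () (degree d) →
      coeff e h * coeff d (e.prod fun _ n => zxy ^ n) = 0 := fun e he => by
    rw [hprod, coeff_zxy_pow, if_neg fun hd => he (by ext; simp [hd]), mul_zero]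
  show finsum _ = _
  rw [finsum_eq_single _ _ hvanish, hprod, single_eq_same, coeff_zxy_pow, if_pos rfl, ← mul_assoc]
  rfl

lemma coeff_reP_oSubst_zxy (h : PowerSeries ℂ) (d : Fin 2 →₀ ℕ) :
    coeff d (reP (oSubst zxy h)) =
      (PowerSeries.coeff (degree d) h * (degree d).choose (d 0) * Complex.I ^ d 1).re :=
  congrArg Complex.re (coeff_oSubst_zxy h d)

lemma coeff_imP_oSubst_zxy (h : PowerSeries ℂ) (d : Fin 2 →₀ ℕ) :
    coeff d (imP (oSubst zxy h)) =
      (PowerSeries.coeff (degree d) h * (degree d).choose (d 0) * Complex.I ^ d 1).im :=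
  congrArg Complex.im (coeff_oSubst_zxy h d)

section Agreement

variable {h h' : PowerSeries ℂ} {p : ℕ}

lemma coeff_sub_single_reP_oSubst_zxy_sub {d : Fin 2 →₀ ℕ} {k : ℕ} (hk : k ≤ d 0) :
    coeff (d - single 0 k) (reP (oSubst zxy h) - reP (oSubst zxy h')) =
      ((PowerSeries.coeff (degree d - k) h - PowerSeries.coeff (degree d - k) h')
        * (degree d - k).choose (d 0 - k) * Complex.I ^ d 1).re := by
  have hdeg : degree (d - single 0 k) = degree d - k := by
    rw [degree_fin_two, degree_fin_two, tsub_apply, tsub_apply, single_eq_same,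
      single_eq_of_ne (by decide), Nat.sub_zero]
    omega
  rw [map_sub, coeff_reP_oSubst_zxy, coeff_reP_oSubst_zxy, hdeg, sub_mul, sub_mul,
    Complex.sub_re, tsub_apply, tsub_apply, single_eq_same, single_eq_of_ne (by decide),
    Nat.sub_zero]

lemma le_order_reP_oSubst_zxy_sub
    (hp : ∀ i < p, PowerSeries.coeff i h = PowerSeries.coeff i h') :
    (p : ℕ∞) ≤ (reP (oSubst zxy h) - reP (oSubst zxy h')).order :=
  nat_le_order fun d hd => by
    rw [map_sub, coeff_reP_oSubst_zxy, coeff_reP_oSubst_zxy, hp _ hd, sub_self]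

lemma le_order_imP_oSubst_zxy_sub
    (hp : ∀ i < p, PowerSeries.coeff i h = PowerSeries.coeff i h') :
    (p : ℕ∞) ≤ (imP (oSubst zxy h) - imP (oSubst zxy h')).order :=
  nat_le_order fun d hd => by
    rw [map_sub, coeff_imP_oSubst_zxy, coeff_imP_oSubst_zxy, hp _ hd, sub_self]

lemma two_le_order_reP_oSubst_zxy (h01 : ∀ i ≤ 1, PowerSeries.coeff i h = 0) :
    2 ≤ (reP (oSubst zxy h)).order := by
  have := nat_le_order (f := reP (oSubst zxy h)) (n := 2) fun d hd => by
    rw [coeff_reP_oSubst_zxy, h01 _ (by omega)]; simp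
  exact_mod_cast this

lemma two_le_order_imP_oSubst_zxy (h01 : ∀ i ≤ 1, PowerSeries.coeff i h = 0) :
    2 ≤ (imP (oSubst zxy h)).order := by
  have := nat_le_order (f := imP (oSubst zxy h)) (n := 2) fun d hd => by
    rw [coeff_imP_oSubst_zxy, h01 _ (by omega)]; simp
  exact_mod_cast this

end Agreement

section Substitution

variable {σ R : Type*} [CommRing R]

lemma one_le_order_X (s : σ) : 1 ≤ (X s : MvPowerSeries σ R).order :=
  one_le_order_iff_constCoeff_eq_zero.mpr (constantCoeff_X s)

lemma one_le_order_X_add {s : σ} {u : MvPowerSeries σ R} (hu : 2 ≤ u.order) :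
    1 ≤ (X s + u).order :=
  one_le_order_add (one_le_order_X s) hu

lemma coeff_X_add_pow_sub_X_add_pow {s : σ} {u u' : MvPowerSeries σ R} {n k : ℕ}
    (hu : 2 ≤ u.order) (hu' : 2 ≤ u'.order) (h : (n : ℕ∞) ≤ (u - u').order) {d : σ →₀ ℕ}
    (hd : degree d < n + k + 1) :
    coeff d ((X s + u) ^ (k + 1)) - coeff d ((X s + u') ^ (k + 1)) =
      (k + 1) * if single s k ≤ d then coeff (d - single s k) (u - u') else 0 := by
  have hlin := le_order_add_pow_sub_add_pow_sub (one_le_order_X s) hu hu' h k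
  have h0 := coeff_eq_zero_of_lt_of_le_order (p := n + k + 1) (by exact_mod_cast hlin) hd
  rw [map_sub, map_sub, sub_eq_zero] at h0
  rw [h0, X_pow_eq, mul_assoc, ← map_natCast (C (σ := σ)), coeff_C_mul, coeff_monomial_mul,
    one_mul]
  push_cast
  rfl

lemma coeff_X_add_pow_mul_X_add_pow {u v : MvPowerSeries (Fin 2) R} (hu : 2 ≤ u.order)
    (hv : 2 ≤ v.order) {d e : Fin 2 →₀ ℕ} (hde : degree d = degree e) :
    coeff d ((X 0 + u) ^ e 0 * (X 1 + v) ^ e 1) = if d = e then 1 else 0 := by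
  have hle := le_order_pow_mul_pow_sub (p := 1) (a' := X 0) (b' := X 1)
    (by rwa [add_sub_cancel_left, one_add_one_eq_two])
    (by rwa [add_sub_cancel_left, one_add_one_eq_two])
    (one_le_order_X_add hu) (one_le_order_X 0) (one_le_order_X_add hv) (one_le_order_X 1)
    (e 0) (e 1)
  have h0 := coeff_eq_zero_of_lt_of_le_order (p := 1 + e 0 + e 1) (by exact_mod_cast hle)
    (d := d) (by rw [hde, degree_fin_two]; omega)
  rw [map_sub, sub_eq_zero] at h0
  rw [h0, X_pow_eq, X_pow_eq, monomial_mul_monomial, one_mul, coeff_monomial,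
    single_add_single_eq]

lemma coeff_mSubst_X_add_sub {k m : ℕ} {u v u' v' : MvPowerSeries (Fin 2) ℝ}
    (hu : 2 ≤ u.order) (hv : 2 ≤ v.order) (hu' : 2 ≤ u'.order) (hv' : 2 ≤ v'.order)
    (hδu : ((m - k : ℕ) : ℕ∞) + 1 ≤ (u - u').order)
    (hδv : ((m - k : ℕ) : ℕ∞) + 1 ≤ (v - v').order)
    {A A' : MvPowerSeries (Fin 2) ℝ} (hA : IsRigidTail k A) (hA' : IsRigidTail k A')
    (hAA' : ∀ e, degree e < m → coeff e A = coeff e A') {d : Fin 2 →₀ ℕ} (hd : degree d = m) :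
    coeff d (mSubst ![X 0 + u, X 1 + v] A) - coeff d (mSubst ![X 0 + u', X 1 + v'] A') =
      coeff d A - coeff d A' := by
  rw [coeff_mSubst_fin_two (one_le_order_X_add hu) (one_le_order_X_add hv),
    coeff_mSubst_fin_two (one_le_order_X_add hu') (one_le_order_X_add hv'),
    ← Finset.sum_sub_distrib, Finset.sum_eq_single_of_mem d (by simp)]
  · rw [coeff_X_add_pow_mul_X_add_pow hu hv rfl, coeff_X_add_pow_mul_X_add_pow hu' hv' rfl,
      if_pos rfl, mul_one, mul_one]
  intro e he hne
  rw [Set.Finite.mem_toFinset, Set.mem_ofPred_eq] at he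
  rcases le_or_gt (degree e) k with hek | hek
  · rw [hA.coeff_eq_zero hek, hA'.coeff_eq_zero hek, zero_mul, zero_mul, sub_zero]
  rcases he.lt_or_eq with hem | hem
  · have hle := le_order_pow_mul_pow_sub (a := X 0 + u) (a' := X 0 + u') (b := X 1 + v)
      (b' := X 1 + v') (by rwa [add_sub_add_left_eq_sub])
      (by rwa [add_sub_add_left_eq_sub]) (one_le_order_X_add hu) (one_le_order_X_add hu')
      (one_le_order_X_add hv) (one_le_order_X_add hv') (e 0) (e 1)
    have h0 := coeff_eq_zero_of_lt_of_le_order (p := m - k + e 0 + e 1) (by exact_mod_cast hle)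
      (d := d) (by rw [hd]; rw [degree_fin_two] at hek; omega)
    rw [map_sub, sub_eq_zero] at h0
    rw [h0, hAA' e (hd ▸ hem), sub_self]
  · rw [coeff_X_add_pow_mul_X_add_pow hu hv hem.symm,
      coeff_X_add_pow_mul_X_add_pow hu' hv' hem.symm, if_neg hne.symm, mul_zero,
      mul_zero, sub_zero]

end Substitution

abbrev TransformData := PowerSeries ℂ × PowerSeries ℂ × MvPowerSeries (Fin 2) ℝ

/-- For `t = (f, g, F*)`, the `F` with `(x + Re f)^k + F*(x + Re f, y + Im f) = x^k + F + Im g`. -/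
def transformedTail (k : ℕ) (t : TransformData) : MvPowerSeries (Fin 2) ℝ :=
  (X 0 + reP (oSubst zxy t.1)) ^ k
    + mSubst ![X 0 + reP (oSubst zxy t.1), X 1 + imP (oSubst zxy t.1)] t.2.2
    - X 0 ^ k - imP (oSubst zxy t.2.1)

/-- The coefficient of `x^j y^(m-j)` in `k x^(k-1) Re(c z^(m+1-k)) - Im(c' z^m)`, which is how
`f_(m+1-k) = c` and `g_m = c'` enter the degree-`m` part of `transformedTail`. -/
def levelCoeff (k m : ℕ) (c c' : ℂ) (j : ℕ) : ℝ :=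
  k * (if k - 1 ≤ j then
      (c * ((m + 1 - k).choose (j - (k - 1)) : ℂ) * Complex.I ^ (m - j)).re else 0)
    - (c' * (m.choose j : ℂ) * Complex.I ^ (m - j)).im

/-- `f_i` first enters `transformedTail` in degree `i + k - 1`. -/
def AgreeBelow (k m : ℕ) (t t' : TransformData) : Prop :=
  (∀ i, i + k ≤ m → PowerSeries.coeff i t.1 = PowerSeries.coeff i t'.1) ∧
  (∀ i < m, PowerSeries.coeff i t.2.1 = PowerSeries.coeff i t'.2.1) ∧
  ∀ e, degree e < m → coeff e t.2.2 = coeff e t'.2.2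

lemma coeff_transformedTail_sub {k m : ℕ} (hk : 1 ≤ k) (hkm : k ≤ m) {t t' : TransformData}
    (hf : ∀ i ≤ 1, PowerSeries.coeff i t.1 = 0) (hf' : ∀ i ≤ 1, PowerSeries.coeff i t'.1 = 0)
    (hA : IsRigidTail k t.2.2) (hA' : IsRigidTail k t'.2.2) (ht : AgreeBelow k m t t')
    {d : Fin 2 →₀ ℕ} (hd : degree d = m) :
    coeff d (transformedTail k t) - coeff d (transformedTail k t') =
      levelCoeff k m (PowerSeries.coeff (m + 1 - k) t.1 - PowerSeries.coeff (m + 1 - k) t'.1)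
        (PowerSeries.coeff m t.2.1 - PowerSeries.coeff m t'.2.1) (d 0)
      + (coeff d t.2.2 - coeff d t'.2.2) := by
  obtain ⟨k, rfl⟩ : ∃ k', k = k' + 1 := ⟨k - 1, by omega⟩
  have hu := two_le_order_reP_oSubst_zxy hf
  have hu' := two_le_order_reP_oSubst_zxy hf'
  have hv := two_le_order_imP_oSubst_zxy hf
  have hv' := two_le_order_imP_oSubst_zxy hf'
  have hagree : ∀ i < m - (k + 1) + 1, PowerSeries.coeff i t.1 = PowerSeries.coeff i t'.1 :=
    fun i hi => ht.1 i (by omega)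
  have hδu := le_order_reP_oSubst_zxy_sub hagree
  have hδv := le_order_imP_oSubst_zxy_sub hagree
  have hpow := coeff_X_add_pow_sub_X_add_pow (s := 0) (k := k) hu hu' hδu (by rw [hd]; omega)
  rw [Nat.cast_add_one] at hδu hδv
  have hsubst := coeff_mSubst_X_add_sub hu hv hu' hv' hδu hδv hA hA' ht.2.2 hd
  have hd1 : d 1 = m - d 0 := by rw [← hd, degree_fin_two]; omega
  have hg : coeff d (imP (oSubst zxy t.2.1)) - coeff d (imP (oSubst zxy t'.2.1)) =
      ((PowerSeries.coeff m t.2.1 - PowerSeries.coeff m t'.2.1) * (m.choose (d 0) : ℂ)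
        * Complex.I ^ (m - d 0)).im := by
    rw [coeff_imP_oSubst_zxy, coeff_imP_oSubst_zxy, hd, hd1, sub_mul, sub_mul, Complex.sub_im]
  have hlin : (if single 0 k ≤ d then
        coeff (d - single 0 k) (reP (oSubst zxy t.1) - reP (oSubst zxy t'.1)) else 0) =
      if k + 1 - 1 ≤ d 0 then ((PowerSeries.coeff (m + 1 - (k + 1)) t.1
        - PowerSeries.coeff (m + 1 - (k + 1)) t'.1)
          * ((m + 1 - (k + 1)).choose (d 0 - (k + 1 - 1)) : ℂ) * Complex.I ^ (m - d 0)).re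
      else 0 := by
    rw [Nat.add_sub_cancel, Nat.add_sub_add_right]
    by_cases hkd : k ≤ d 0
    · rw [if_pos (single_le_iff.mpr hkd), if_pos hkd, coeff_sub_single_reP_oSubst_zxy_sub hkd,
        hd, hd1]
    · rw [if_neg (mt single_le_iff.mp hkd), if_neg hkd]
  unfold transformedTail
  simp only [map_add, map_sub]
  rw [levelCoeff, ← hlin, ← hg]
  push_cast at hpow ⊢
  linear_combination hpow + hsubst

lemma coeff_transformedTail_of_degree_le {k : ℕ} {t : TransformData}
    (hf : ∀ i ≤ 1, PowerSeries.coeff i t.1 = 0) (hg : ∀ i ≤ k, PowerSeries.coeff i t.2.1 = 0)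
    (hA : IsRigidTail k t.2.2) {d : Fin 2 →₀ ℕ} (hd : degree d ≤ k) :
    coeff d (transformedTail k t) = 0 := by
  have hu := two_le_order_reP_oSubst_zxy hf
  have hv := two_le_order_imP_oSubst_zxy hf
  have hpow := le_order_pow_sub_pow (p := 1) (a' := X 0)
    (by rwa [add_sub_cancel_left, one_add_one_eq_two]) (one_le_order_X_add hu) (one_le_order_X 0) k
  have hpow0 := coeff_eq_zero_of_lt_of_le_order (p := 1 + k) (by exact_mod_cast hpow)
    (d := d) (by omega)
  have hsubst : coeff d (mSubst ![X 0 + reP (oSubst zxy t.1), X 1 + imP (oSubst zxy t.1)] t.2.2)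
      = 0 := by
    rw [coeff_mSubst_fin_two (one_le_order_X_add hu) (one_le_order_X_add hv)]
    refine Finset.sum_eq_zero fun e he => ?_
    rw [Set.Finite.mem_toFinset, Set.mem_ofPred_eq] at he
    rw [hA.coeff_eq_zero (by omega), zero_mul]
  have hG : coeff d (imP (oSubst zxy t.2.1)) = 0 := by
    rw [coeff_imP_oSubst_zxy, hg _ hd]; simp
  rw [map_sub] at hpow0
  rw [transformedTail, map_sub, map_sub, map_add, hsubst, hG]
  linear_combination hpow0

lemma levelCoeff_zero_right {k m : ℕ} (hk : 1 < k) (hm : 1 ≤ m) (c c' : ℂ) :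
    levelCoeff k m c c' 0 = -(c' * Complex.I ^ (m - 1)).re := by
  rw [levelCoeff, if_neg (by omega), Nat.choose_zero_right, Nat.sub_zero,
    show m = m - 1 + 1 by omega, pow_succ]
  simp only [Nat.cast_one, mul_one, mul_zero, zero_sub, ← mul_assoc, Complex.mul_I_im]
  rw [Nat.add_sub_cancel]

lemma levelCoeff_one_right {k m : ℕ} (hk : 2 < k) (c c' : ℂ) :
    levelCoeff k m c c' 1 = -m * (c' * Complex.I ^ (m - 1)).im := by
  rw [levelCoeff, if_neg (by omega), Nat.choose_one_right, mul_right_comm, mul_zero, zero_sub,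
    ← Complex.ofReal_natCast, Complex.im_mul_ofReal]
  ring

lemma levelCoeff_sub_one_right {k m : ℕ} (hk : 1 ≤ k) (hkm : k ≤ m) (c c' : ℂ) :
    levelCoeff k m c c' (k - 1) = -k * (c * Complex.I ^ (m - k)).im
      - (c' * (m.choose (k - 1) : ℂ) * Complex.I ^ (m - k + 1)).im := by
  rw [levelCoeff, if_pos le_rfl, Nat.sub_self, Nat.choose_zero_right,
    show m - (k - 1) = m - k + 1 by omega, pow_succ]
  simp only [Nat.cast_one, mul_one, ← mul_assoc, Complex.mul_I_re]
  ring

lemma levelCoeff_self {k m : ℕ} (hk : 1 ≤ k) (c c' : ℂ) :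
    levelCoeff k m c c' k = k * (m + 1 - k : ℕ) * (c * Complex.I ^ (m - k)).re
      - (c' * (m.choose k : ℂ) * Complex.I ^ (m - k)).im := by
  rw [levelCoeff, if_pos (Nat.sub_le k 1), show k - (k - 1) = 1 by omega, Nat.choose_one_right,
    mul_right_comm c, ← Complex.ofReal_natCast, Complex.re_mul_ofReal]
  ring

lemma eq_zero_of_re_im_mul_I_pow_eq_zero {w : ℂ} {s : ℕ} (hre : (w * Complex.I ^ s).re = 0)
    (him : (w * Complex.I ^ s).im = 0) : w = 0 :=
  (mul_eq_zero.mp (Complex.ext hre him)).resolve_right (pow_ne_zero _ Complex.I_ne_zero)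

lemma eq_zero_of_levelCoeff_eq_zero {k m : ℕ} (hk : 2 < k) (hkm : k < m) {c c' : ℂ}
    (h : ∀ j, (j = 0 ∨ j = 1 ∨ j = k - 1 ∨ j = k) → levelCoeff k m c c' j = 0) :
    c = 0 ∧ c' = 0 := by
  have h0 := h 0 (by simp)
  have h1 := h 1 (by simp)
  rw [levelCoeff_zero_right (by omega) (by omega), neg_eq_zero] at h0
  rw [levelCoeff_one_right hk, mul_eq_zero, neg_eq_zero, Nat.cast_eq_zero] at h1
  have hc' : c' = 0 := eq_zero_of_re_im_mul_I_pow_eq_zero h0 (h1.resolve_left (by omega))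
  have hk1 := h (k - 1) (by simp)
  have hkk := h k (by simp)
  rw [levelCoeff_sub_one_right (by omega) hkm.le, hc'] at hk1
  rw [levelCoeff_self (by omega), hc'] at hkk
  simp only [zero_mul, Complex.zero_im, sub_zero, mul_eq_zero, neg_eq_zero, Nat.cast_eq_zero]
    at hk1 hkk
  refine ⟨eq_zero_of_re_im_mul_I_pow_eq_zero ?_ (hk1.resolve_left (by omega)), hc'⟩
  exact hkk.resolve_left (by omega)

/-- The equations for `j = 0, 1` determine `c' * I^(m-1)`; those for `j = k - 1, k` then
determine `c * I^(m-k)`. -/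
def levelSolution (k m : ℕ) (b : ℕ → ℝ) : ℂ × ℂ :=
  let c' : ℂ := ⟨-b 0, -b 1 / m⟩ / Complex.I ^ (m - 1)
  (⟨(b k + (c' * (m.choose k : ℂ) * Complex.I ^ (m - k)).im) / (k * (m + 1 - k : ℕ)),
      -(b (k - 1) + (c' * (m.choose (k - 1) : ℂ) * Complex.I ^ (m - k + 1)).im) / k⟩
      / Complex.I ^ (m - k), c')

lemma levelCoeff_levelSolution {k m : ℕ} (hk : 2 < k) (hkm : k < m) (b : ℕ → ℝ) {j : ℕ}
    (hj : j = 0 ∨ j = 1 ∨ j = k - 1 ∨ j = k) :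
    levelCoeff k m (levelSolution k m b).1 (levelSolution k m b).2 j = b j := by
  have hI : ∀ s, Complex.I ^ s ≠ 0 := fun s => pow_ne_zero s Complex.I_ne_zero
  have hm : (m : ℝ) ≠ 0 := by exact_mod_cast (show m ≠ 0 by omega)
  have hk0 : (k : ℝ) ≠ 0 := by exact_mod_cast (show k ≠ 0 by omega)
  have hn : ((m + 1 - k : ℕ) : ℝ) ≠ 0 := by exact_mod_cast (show m + 1 - k ≠ 0 by omega)
  rcases hj with rfl | rfl | rfl | rfl
  · rw [levelCoeff_zero_right (by omega) (by omega)]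
    simp [levelSolution, div_mul_cancel₀ _ (hI _)]
  · rw [levelCoeff_one_right hk]
    simp only [levelSolution, div_mul_cancel₀ _ (hI _)]
    field_simp
  · rw [levelCoeff_sub_one_right (by omega) hkm.le]
    simp only [levelSolution, div_mul_cancel₀ _ (hI _)]
    field_simp
    ring
  · rw [levelCoeff_self (by omega)]
    simp only [levelSolution, div_mul_cancel₀ _ (hI _)]
    field_simp
    ring

def IsAdmissible (k : ℕ) (t : TransformData) : Prop :=
  (∀ i ≤ 1, PowerSeries.coeff i t.1 = 0) ∧ (∀ i ≤ k, PowerSeries.coeff i t.2.1 = 0) ∧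
    IsRigidTail k t.2.2 ∧ IsRigidTNormal k t.2.2

lemma agreeBelow_of_isAdmissible {k : ℕ} {t t' : TransformData} (ht : IsAdmissible k t)
    (ht' : IsAdmissible k t') : AgreeBelow k (k + 1) t t' := by
  refine ⟨fun i hi => ?_, fun i hi => ?_, fun e he => ?_⟩
  · rw [ht.1 i (by omega), ht'.1 i (by omega)]
  · rw [ht.2.1 i (by omega), ht'.2.1 i (by omega)]
  · rw [ht.2.2.1.coeff_eq_zero (by omega), ht'.2.2.1.coeff_eq_zero (by omega)]

lemma AgreeBelow.succ_of_transformedTail_eq {k m : ℕ} (hk : 2 < k) (hkm : k < m)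
    {t t' : TransformData} (ht : IsAdmissible k t) (ht' : IsAdmissible k t')
    (h : transformedTail k t = transformedTail k t') (hm : AgreeBelow k m t t') :
    AgreeBelow k (m + 1) t t' := by
  have hlevel : ∀ d, degree d = m →
      levelCoeff k m (PowerSeries.coeff (m + 1 - k) t.1 - PowerSeries.coeff (m + 1 - k) t'.1)
        (PowerSeries.coeff m t.2.1 - PowerSeries.coeff m t'.2.1) (d 0)
      + (coeff d t.2.2 - coeff d t'.2.2) = 0 := fun d hd => by
    rw [← coeff_transformedTail_sub (by omega) hkm.le ht.1 ht'.1 ht.2.2.1 ht'.2.2.1 hm hd, h,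
      sub_self]
  obtain ⟨hf, hg⟩ := eq_zero_of_levelCoeff_eq_zero hk hkm fun j hj => by
    have hd : degree (single 0 j + single 1 (m - j) : Fin 2 →₀ ℕ) = m := by
      rw [map_add, degree_single, degree_single]; omega
    have hd0 : (single 0 j + single 1 (m - j) : Fin 2 →₀ ℕ) 0 = j := by simp
    have := hlevel _ hd
    have hkd : k < degree (single 0 j + single 1 (m - j) : Fin 2 →₀ ℕ) := by rwa [hd]
    rw [← hd0] at hj
    rwa [ht.2.2.2.coeff_eq_zero hkd hj, ht'.2.2.2.coeff_eq_zero hkd hj, sub_zero, add_zero,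
      hd0] at this
  have hA : ∀ e, degree e = m → coeff e t.2.2 = coeff e t'.2.2 := fun e he => by
    have := hlevel e he
    rw [hf, hg] at this
    simpa [levelCoeff, sub_eq_zero] using this
  refine ⟨fun i hi => ?_, fun i hi => ?_, fun e he => ?_⟩
  · rcases Nat.lt_or_ge m (i + k) with him | him
    · rw [show i = m + 1 - k by omega]; exact sub_eq_zero.mp hf
    · exact hm.1 i him
  · rcases Nat.lt_or_ge i m with him | him
    · exact hm.2.1 i him
    · rw [show i = m by omega]; exact sub_eq_zero.mp hg
  · rcases Nat.lt_or_ge (degree e) m with hem | hem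
    · exact hm.2.2 e hem
    · exact hA e (by omega)

lemma eq_of_forall_agreeBelow {k : ℕ} {t t' : TransformData}
    (h : ∀ m, k < m → AgreeBelow k m t t') : t = t' :=
  Prod.ext (PowerSeries.ext fun i => (h (i + k + 1) (by omega)).1 i (by omega))
    (Prod.ext (PowerSeries.ext fun i => (h (i + k + 1) (by omega)).2.1 i (by omega))
      (MvPowerSeries.ext fun e => (h (degree e + k + 1) (by omega)).2.2 e (by omega)))

lemma eq_of_transformedTail_eq {k : ℕ} (hk : 2 < k) {t t' : TransformData}
    (ht : IsAdmissible k t) (ht' : IsAdmissible k t')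
    (h : transformedTail k t = transformedTail k t') : t = t' := by
  refine eq_of_forall_agreeBelow (k := k) fun m hm => ?_
  induction m, hm using Nat.le_induction with
  | base => exact agreeBelow_of_isAdmissible ht ht'
  | succ m hm ih => exact ih.succ_of_transformedTail_eq hk hm ht ht' h

/-- `s m = (f_(m+1-k), g_m, j ↦ F*_(j,m-j))` is the level-`m` part of the data. -/
def assemble (k : ℕ) (s : ℕ → ℂ × ℂ × (ℕ → ℝ)) : TransformData :=
  (PowerSeries.mk fun i => if 2 ≤ i then (s (i + k - 1)).1 else 0,
    PowerSeries.mk fun i => if k < i then (s i).2.1 else 0,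
    fun d => if k < degree d then (s (degree d)).2.2 (d 0) else 0)

def truncBelow (s : ℕ → ℂ × ℂ × (ℕ → ℝ)) (m : ℕ) : ℕ → ℂ × ℂ × (ℕ → ℝ) :=
  fun m' => if m' < m then s m' else 0

section Assemble

variable {k : ℕ} {s : ℕ → ℂ × ℂ × (ℕ → ℝ)}

lemma coeff_assemble_fst (i : ℕ) :
    PowerSeries.coeff i (assemble k s).1 = if 2 ≤ i then (s (i + k - 1)).1 else 0 := by
  rw [assemble, PowerSeries.coeff_mk]

lemma coeff_assemble_snd (i : ℕ) :
    PowerSeries.coeff i (assemble k s).2.1 = if k < i then (s i).2.1 else 0 := by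
  rw [assemble, PowerSeries.coeff_mk]

lemma coeff_assemble_tail (d : Fin 2 →₀ ℕ) :
    coeff d (assemble k s).2.2 = if k < degree d then (s (degree d)).2.2 (d 0) else 0 :=
  rfl

lemma isAdmissible_assemble
    (hs : ∀ m j, (j = 0 ∨ j = 1 ∨ j = k - 1 ∨ j = k) → (s m).2.2 j = 0) :
    IsAdmissible k (assemble k s) := by
  refine ⟨fun i hi => ?_, fun i hi => ?_, fun j l hjl => ?_, fun j l _ hj => ?_⟩
  · rw [coeff_assemble_fst, if_neg (by omega)]
  · rw [coeff_assemble_snd, if_neg (by omega)]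
  · rw [cfxy, coeff_assemble_tail, if_neg (by rw [map_add, degree_single, degree_single]; omega)]
  · rw [cfxy, coeff_assemble_tail]
    simp [hs _ _ hj]

lemma agreeBelow_assemble_truncBelow (m : ℕ) :
    AgreeBelow k m (assemble k s) (assemble k (truncBelow s m)) := by
  refine ⟨fun i hi => ?_, fun i hi => ?_, fun e he => ?_⟩
  · rw [coeff_assemble_fst, coeff_assemble_fst]
    split_ifs with hi2
    · simp only [truncBelow, if_pos (show i + k - 1 < m by omega)]
    · rfl
  · simp only [coeff_assemble_snd, truncBelow, if_pos hi]
  · simp only [coeff_assemble_tail, truncBelow, if_pos he]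

lemma coeff_assemble_level {m : ℕ} (hkm : k < m) {d : Fin 2 →₀ ℕ} (hd : degree d = m) :
    PowerSeries.coeff (m + 1 - k) (assemble k s).1 = (s m).1 ∧
      PowerSeries.coeff m (assemble k s).2.1 = (s m).2.1 ∧
      coeff d (assemble k s).2.2 = (s m).2.2 (d 0) := by
  rw [coeff_assemble_fst, coeff_assemble_snd, coeff_assemble_tail, if_pos (by omega),
    if_pos hkm, if_pos (by omega), show m + 1 - k + k - 1 = m by omega, hd]
  exact ⟨rfl, rfl, rfl⟩

end Assemble

def levelStep (k : ℕ) (F : MvPowerSeries (Fin 2) ℝ) (s : ℕ → ℂ × ℂ × (ℕ → ℝ)) (m : ℕ) :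
    ℂ × ℂ × (ℕ → ℝ) :=
  let b : ℕ → ℝ := fun j => cfxy F j (m - j) - cfxy (transformedTail k (assemble k s)) j (m - j)
  let c := levelSolution k m b
  (c.1, c.2, fun j =>
    if j = 0 ∨ j = 1 ∨ j = k - 1 ∨ j = k then 0 else b j - levelCoeff k m c.1 c.2 j)

lemma levelStep_spec {k m : ℕ} (hk : 2 < k) (hkm : k < m) (F : MvPowerSeries (Fin 2) ℝ)
    (s : ℕ → ℂ × ℂ × (ℕ → ℝ)) (j : ℕ) :
    levelCoeff k m (levelStep k F s m).1 (levelStep k F s m).2.1 j + (levelStep k F s m).2.2 j =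
      cfxy F j (m - j) - cfxy (transformedTail k (assemble k s)) j (m - j) := by
  by_cases hj : j = 0 ∨ j = 1 ∨ j = k - 1 ∨ j = k
  · simp only [levelStep, if_pos hj, add_zero]
    exact levelCoeff_levelSolution hk hkm _ hj
  · simp only [levelStep, if_neg hj]
    ring

def solution (k : ℕ) (F : MvPowerSeries (Fin 2) ℝ) : ℕ → ℂ × ℂ × (ℕ → ℝ)
  | m => if k < m then levelStep k F (fun m' => if _ : m' < m then solution k F m' else 0) m
    else 0

lemma solution_eq (k : ℕ) (F : MvPowerSeries (Fin 2) ℝ) (m : ℕ) :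
    solution k F m = if k < m then levelStep k F (truncBelow (solution k F) m) m else 0 := by
  rw [solution]
  rfl

lemma isAdmissible_assemble_solution (k : ℕ) (F : MvPowerSeries (Fin 2) ℝ) :
    IsAdmissible k (assemble k (solution k F)) ∧
      ∀ m, IsAdmissible k (assemble k (truncBelow (solution k F) m)) := by
  have hs : ∀ m j, (j = 0 ∨ j = 1 ∨ j = k - 1 ∨ j = k) → (solution k F m).2.2 j = 0 := by
    intro m j hj
    rw [solution_eq]
    split_ifs
    · simp only [levelStep, if_pos hj]
    · rfl
  refine ⟨isAdmissible_assemble hs, fun m => isAdmissible_assemble fun m' j hj => ?_⟩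
  rw [truncBelow]
  split_ifs
  · exact hs m' j hj
  · rfl

lemma transformedTail_assemble_solution {k : ℕ} (hk : 2 < k) {F : MvPowerSeries (Fin 2) ℝ}
    (hF : IsRigidTail k F) : transformedTail k (assemble k (solution k F)) = F := by
  ext d
  obtain ⟨hsol, htrunc⟩ := isAdmissible_assemble_solution k F
  by_cases hdk : degree d ≤ k
  · rw [coeff_transformedTail_of_degree_le hsol.1 hsol.2.1 hsol.2.2.1 hdk, hF.coeff_eq_zero hdk]
  set m := degree d with hm
  have hkm : k < m := not_le.mp hdk
  set s' := truncBelow (solution k F) m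
  have hstep : solution k F m = levelStep k F s' m := by rw [solution_eq, if_pos hkm]
  have hmaster := coeff_transformedTail_sub (by omega) hkm.le hsol.1 (htrunc m).1 hsol.2.2.1
    (htrunc m).2.2.1 (agreeBelow_assemble_truncBelow m) hm.symm
  obtain ⟨hf, hg, hA⟩ := coeff_assemble_level (s := solution k F) hkm hm.symm
  obtain ⟨hf', hg', hA'⟩ := coeff_assemble_level (s := s') hkm hm.symm
  have hs'm : s' m = 0 := if_neg (lt_irrefl m)
  rw [hf, hg, hA, hf', hg', hA', hs'm, hstep] at hmaster
  have := levelStep_spec hk hkm F s' (d 0)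
  rw [show m - d 0 = d 1 by rw [hm, degree_fin_two]; omega, ← coeff_eq_cfxy, ← coeff_eq_cfxy]
    at this
  simp only [Prod.fst_zero, Prod.snd_zero, Pi.zero_apply, sub_zero] at hmaster
  linarith

lemma transformedTail_eq_iff {k : ℕ} {t : TransformData} {F : MvPowerSeries (Fin 2) ℝ} :
    transformedTail k t = F ↔
      (X 0 + reP (oSubst zxy t.1)) ^ k
          + mSubst ![X 0 + reP (oSubst zxy t.1), X 1 + imP (oSubst zxy t.1)] t.2.2
        = X 0 ^ k + F + imP (oSubst zxy t.2.1) := by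
  rw [transformedTail]
  constructor <;> intro h <;> linear_combination h

/-- Lemma 4.1: a rigid defining series with tube model is taken to rigid
t-normal form by a unique transformation `(z + Σ_{i≥2} f_i z^i, w + Σ_{i≥k+1} g_i z^i)`. -/
theorem rigid_tNormalForm_exists_unique (k : ℕ) (hk : 2 < k)
    (F : MvPowerSeries (Fin 2) ℝ) (hF : IsRigidTail k F) :
    ∃! t : PowerSeries ℂ × PowerSeries ℂ × MvPowerSeries (Fin 2) ℝ,
      (∀ i : ℕ, i ≤ 1 → PowerSeries.coeff (R := ℂ) i t.1 = 0) ∧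
      (∀ i : ℕ, i ≤ k → PowerSeries.coeff (R := ℂ) i t.2.1 = 0) ∧
      IsRigidTail k t.2.2 ∧ IsRigidTNormal k t.2.2 ∧
      (X 0 + reP (oSubst zxy t.1)) ^ k
          + mSubst ![X 0 + reP (oSubst zxy t.1), X 1 + imP (oSubst zxy t.1)] t.2.2
        = X 0 ^ k + F + imP (oSubst zxy t.2.1) := by
  have hsol := (isAdmissible_assemble_solution k F).1
  have hsolF := transformedTail_assemble_solution hk hF
  have key : ∃! t, IsAdmissible k t ∧ transformedTail k t = F :=
    ⟨assemble k (solution k F), ⟨hsol, hsolF⟩,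
      fun t ht => eq_of_transformedTail_eq hk ht.1 hsol (ht.2.trans hsolF.symm)⟩
  simpa only [IsAdmissible, and_assoc, transformedTail_eq_iff] using key
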